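/- In the crossed product R(G) ⋊ ℂℤ₂ (G ⊆ U(n) self-transpose, s the transposition automorphism), the matrix v = (u_{ij}s) is orthogonal: Σ_k (u_{ik}s)(u_{jk}s) = δ_{ij}·1 and Σ_k (u_{ki}s)(u_{kj}s) = δ_{ij}·1. -/

import Mathlib

/-! Since `S² = 1` and `S f = (f ∘ σ) S`, each product `(u_{ik} S)(u_{jk} S)` equals
`u_{ik} · (u_{jk} ∘ σ)`, and `u_{jk} ∘ σ` is the complex conjugate of `u_{jk}` because `σ` is
entrywise conjugation. Evaluated at `g ∈ G`, the two sums are then the entries of `g gᴴ` and of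
`(gᴴ g)ᵀ`, i.e. of the identity matrix. -/

open Matrix

/-- The coordinate function `u_{ij} : G → ℂ` of a subgroup `G ⊆ U(n)`. -/
def coordFun (n : ℕ) (G : Subgroup (Matrix.unitaryGroup (Fin n) ℂ)) (i j : Fin n) :
    G → ℂ :=
  fun g => ((g : Matrix.unitaryGroup (Fin n) ℂ) : Matrix (Fin n) (Fin n) ℂ) i j

theorem mul_mul_mul_eq_of_mul_self_eq_one {M : Type*} [Monoid M] {a b c S : M}
    (hS : S * S = 1) (hb : S * b = c * S) : a * S * (b * S) = a * c := by
  rw [mul_assoc a, ← mul_assoc S, hb, mul_assoc c, hS, mul_one]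

section UnitaryGroup

variable {m α : Type*} [Fintype m] [DecidableEq m] [CommRing α] [StarRing α]
  {U : Matrix m m α}

theorem sum_mul_star_row_of_mem_unitaryGroup (hU : U ∈ unitaryGroup m α) (i j : m) :
    ∑ k, U i k * star (U j k) = if i = j then 1 else 0 := by
  simpa only [mul_apply, star_apply, one_apply] using congrFun₂ (mem_unitaryGroup_iff.mp hU) i j

theorem sum_mul_star_col_of_mem_unitaryGroup (hU : U ∈ unitaryGroup m α) (i j : m) :
    ∑ k, U k i * star (U k j) = if i = j then 1 else 0 := by
  have h := congrFun₂ (mem_unitaryGroup_iff'.mp hU) j i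
  simp only [mul_apply, star_apply, one_apply, eq_comm (a := j)] at h
  simpa only [mul_comm (U _ i)] using h

end UnitaryGroup

section CoordFun

variable {n : ℕ} {G : Subgroup (unitaryGroup (Fin n) ℂ)}

theorem coordFun_comp_eq_star {σG : G ≃* G}
    (hσG : ∀ g : G, ((σG g : unitaryGroup (Fin n) ℂ) : Matrix (Fin n) (Fin n) ℂ)
      = ((g : unitaryGroup (Fin n) ℂ) : Matrix (Fin n) (Fin n) ℂ).map (starRingEnd ℂ))
    (i j : Fin n) : coordFun n G i j ∘ σG = star (coordFun n G i j) := by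
  funext g
  simp [coordFun, hσG g]

theorem sum_coordFun_mul_star_row (i j : Fin n) :
    ∑ k, coordFun n G i k * star (coordFun n G j k) = if i = j then 1 else 0 := by
  funext g
  simpa only [coordFun, Finset.sum_apply, Pi.mul_apply, Pi.star_apply,
    apply_ite (fun f : G → ℂ => f g), Pi.one_apply, Pi.zero_apply]
    using sum_mul_star_row_of_mem_unitaryGroup (g : unitaryGroup (Fin n) ℂ).2 i j

theorem sum_coordFun_mul_star_col (i j : Fin n) :
    ∑ k, coordFun n G k i * star (coordFun n G k j) = if i = j then 1 else 0 := by
  funext g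
  simpa only [coordFun, Finset.sum_apply, Pi.mul_apply, Pi.star_apply,
    apply_ite (fun f : G → ℂ => f g), Pi.one_apply, Pi.zero_apply]
    using sum_mul_star_col_of_mem_unitaryGroup (g : unitaryGroup (Fin n) ℂ).2 i j

end CoordFun

theorem halfLiberated_matrix_orthogonal_general
    (n : ℕ) (G : Subgroup (Matrix.unitaryGroup (Fin n) ℂ))
    (σG : G ≃* G)
    (hσG : ∀ g : G,
      ((σG g : Matrix.unitaryGroup (Fin n) ℂ) : Matrix (Fin n) (Fin n) ℂ)
        = ((g : Matrix.unitaryGroup (Fin n) ℂ) : Matrix (Fin n) (Fin n) ℂ).map (starRingEnd ℂ))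
    (B : Type*) [Ring B] [Algebra ℂ B]
    (ι : (G → ℂ) →ₐ[ℂ] B)
    (S : B) (hS2 : S * S = 1)
    (hcross : ∀ f : G → ℂ, S * ι f = ι (f ∘ σG) * S) :
    ∀ i j : Fin n,
      (∑ k : Fin n, (ι (coordFun n G i k) * S) * (ι (coordFun n G j k) * S)
        = if i = j then (1 : B) else 0) ∧
      (∑ k : Fin n, (ι (coordFun n G k i) * S) * (ι (coordFun n G k j) * S)
        = if i = j then (1 : B) else 0) := by
  have hprod : ∀ a b c d : Fin n, ι (coordFun n G a b) * S * (ι (coordFun n G c d) * S)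
      = ι (coordFun n G a b * star (coordFun n G c d)) := fun a b c d => by
    rw [mul_mul_mul_eq_of_mul_self_eq_one hS2 (hcross _), coordFun_comp_eq_star hσG, map_mul]
  intro i j
  simp only [hprod, ← map_sum, sum_coordFun_mul_star_row, sum_coordFun_mul_star_col,
    apply_ite ι, map_one, map_zero, and_self]

/-- In the crossed product `R(G) ⋊ ℂℤ₂` (modelled inside an ambient
algebra `B` as in the main construction), the matrix `v = (u_{ij}·S)` is
orthogonal: `Σ_k (u_{ik}S)(u_{jk}S) = δ_{ij}·1` and
`Σ_k (u_{ki}S)(u_{kj}S) = δ_{ij}·1`. -/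
theorem halfLiberated_matrix_orthogonal
    (n : ℕ) (G : Subgroup (Matrix.unitaryGroup (Fin n) ℂ))
    (hcompact : IsCompact (G : Set (Matrix.unitaryGroup (Fin n) ℂ)))
    (σG : G ≃* G)
    (hσG : ∀ g : G,
      ((σG g : Matrix.unitaryGroup (Fin n) ℂ) : Matrix (Fin n) (Fin n) ℂ)
        = ((g : Matrix.unitaryGroup (Fin n) ℂ) : Matrix (Fin n) (Fin n) ℂ).map (starRingEnd ℂ))
    (B : Type*) [Ring B] [Algebra ℂ B] [StarRing B]
    (ι : (G → ℂ) →ₐ[ℂ] B) (hstarι : ∀ f : G → ℂ, star (ι f) = ι (star f))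
    (S : B) (hS2 : S * S = 1) (hSstar : star S = S)
    (hcross : ∀ f : G → ℂ, S * ι f = ι (f ∘ σG) * S) :
    ∀ i j : Fin n,
      (∑ k : Fin n, (ι (coordFun n G i k) * S) * (ι (coordFun n G j k) * S)
        = if i = j then (1 : B) else 0) ∧
      (∑ k : Fin n, (ι (coordFun n G k i) * S) * (ι (coordFun n G k j) * S)
        = if i = j then (1 : B) else 0) :=
  halfLiberated_matrix_orthogonal_general n G σG hσG B ι S hS2 hcross
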